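/- arXiv:2307.04674 — 7 statements merged into one kernel-verified Lean document; each statement's English description precedes it below -/
import Mathlib

section
/- For natural numbers a_x, b_x, and a waiting limit w̄(x), if every arrival time a with a_x ≤ a ≤ a_x + b_x at vertex x is achievable from the start vertex s, and (x,y) ∈ E is an edge with autonomous duration α = τ((x,y),0), then every arrival time a' with a_x + α ≤ a' ≤ a_x + b_x + w̄(x) + α at vertex y is achievable from s (by waiting an appropriate amount at x and traversing the edge autonomously). In particular the single node (y, a_x + α, b_x + w̄(x)) represents all arrival times at y obtainable from (x, a_x, b_x) under autonomous operation. -/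
/-- A step of an execution path: vertex `v`, arrival time `t`, waiting time `w`,
and mode of operation `m` (`false` = autonomous mode 0, `true` = assisted mode 1). -/
structure Step (V : Type*) where
  v : V
  t : ℕ
  w : ℕ
  m : Bool

/-- The operator is available on the (integer) interval `[t₁, t₂]`. -/
def AvailOn (μ : ℕ → Bool) (t₁ t₂ : ℕ) : Prop :=
  ∀ t, t₁ ≤ t → t ≤ t₂ → μ t = true

/-- Validity of an execution path from the start vertex `s`:
the path starts at `s` at time `0`; consecutive vertices are joined by edges;
arrival times are consistent with waiting times and the chosen mode's travel
duration; waiting limits are respected; and assisted mode is used only when the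
operator is available for the whole traversal. -/
def ValidPath {V : Type*} (E : V → V → Prop) (τ : V → V → Bool → ℕ)
    (μ : ℕ → Bool) (wbar : V → ℕ) (s : V) (P : List (Step V)) : Prop :=
  (∃ st, P.head? = some st ∧ st.v = s ∧ st.t = 0) ∧
  ∀ i (hi : i + 1 < P.length),
    let p := P.get ⟨i, Nat.lt_of_succ_lt hi⟩
    let q := P.get ⟨i + 1, hi⟩
    E p.v q.v ∧ p.w ≤ wbar p.v ∧
      q.t = p.t + p.w + τ p.v q.v p.m ∧
      (p.m = true → AvailOn μ (p.t + p.w) q.t)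

/-- Arrival time `a` at vertex `x` is achievable from `s`: some valid execution
path from `s` ends at `x` with final arrival time `a`. -/
def Achievable {V : Type*} (E : V → V → Prop) (τ : V → V → Bool → ℕ)
    (μ : ℕ → Bool) (wbar : V → ℕ) (s x : V) (a : ℕ) : Prop :=
  ∃ P st, ValidPath E τ μ wbar s P ∧ P.getLast? = some st ∧ st.v = x ∧ st.t = a

lemma validpath_extend {V : Type*} (E : V → V → Prop) (τ : V → V → Bool → ℕ)
    (μ : ℕ → Bool) (wbar : V → ℕ) (s : V) (A : List (Step V)) (st st' q : Step V)
    (hv : st'.v = st.v) (ht : st'.t = st.t)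
    (h : ValidPath E τ μ wbar s (A ++ [st]))
    (hedge : E st.v q.v) (hw : st'.w ≤ wbar st.v)
    (hq : q.t = st.t + st'.w + τ st.v q.v st'.m)
    (hm : st'.m = true → AvailOn μ (st.t + st'.w) q.t) :
    ValidPath E τ μ wbar s (A ++ [st', q]) := by
  obtain ⟨⟨s0, hs0, hv0, ht0⟩, hstep⟩ := h
  have gA : ∀ j (hj : j < A.length), ((A ++ [st', q])[j]'(by simp; omega)) = A[j] :=
    fun j hj => List.getElem_append_left hj
  have gPA : ∀ j (hj : j < A.length), ((A ++ [st])[j]'(by simp; omega)) = A[j] :=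
    fun j hj => List.getElem_append_left hj
  have gk : ((A ++ [st', q])[A.length]'(by simp)) = st' := by
    rw [List.getElem_append_right le_rfl]; simp
  have gk1 : ((A ++ [st', q])[A.length + 1]'(by simp)) = q := by
    rw [List.getElem_append_right (by omega)]; simp
  have gPk : ((A ++ [st])[A.length]'(by simp)) = st := by
    rw [List.getElem_append_right le_rfl]; simp
  constructor
  · cases A with
    | nil =>
      simp only [List.nil_append, List.head?_cons, Option.some.injEq] at hs0
      exact ⟨st', by simp, by rw [hv, hs0]; exact hv0, by rw [ht, hs0]; exact ht0⟩
    | cons a A' =>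
      exact ⟨s0, by simpa using hs0, hv0, ht0⟩
  · intro i hi
    have hi' : i + 1 < A.length + 2 := by simpa using hi
    simp only [List.get_eq_getElem]
    rcases lt_trichotomy (i + 1) A.length with h1 | h1 | h1
    · have := hstep i (by simp; omega)
      simp only [List.get_eq_getElem] at this
      simp only [gPA i (by omega), gPA (i+1) (by omega)] at this
      simp only [gA i (by omega), gA (i+1) (by omega)]
      exact this
    · have h0 : i + 1 - A.length = 0 := by omega
      have e2 : ((A ++ [st', q])[i + 1]'(by simp; omega)) = st' := by
        rw [List.getElem_append_right (by omega)]; simp [h0]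
      have eP2 : ((A ++ [st])[i + 1]'(by simp; omega)) = st := by
        rw [List.getElem_append_right (by omega)]; simp [h0]
      have := hstep i (by simp; omega)
      simp only [List.get_eq_getElem] at this
      simp only [gPA i (by omega), eP2] at this
      simp only [gA i (by omega), e2, hv, ht]
      exact this
    · have hik : i = A.length := by omega
      subst hik
      simp only [gk, gk1, hv, ht]
      exact ⟨hedge, hw, hq, hm⟩

lemma achievable_step {V : Type*} (E : V → V → Prop) (τ : V → V → Bool → ℕ)
    (μ : ℕ → Bool) (wbar : V → ℕ) (s x y : V) (a w : ℕ)
    (ha : Achievable E τ μ wbar s x a) (hE : E x y) (hw : w ≤ wbar x) :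
    Achievable E τ μ wbar s y (a + w + τ x y false) := by
  obtain ⟨P, st, hval, hlast, hsv, hst⟩ := ha
  have hPne : P ≠ [] := by intro h; simp [h] at hlast
  have hgl : P.getLast hPne = st := by
    rw [List.getLast?_eq_getLast hPne] at hlast
    exact Option.some.inj hlast
  have hPd : P.dropLast ++ [st] = P := by
    rw [← hgl]; exact List.dropLast_append_getLast hPne
  refine ⟨P.dropLast ++ [⟨x, a, w, false⟩, ⟨y, a + w + τ x y false, 0, false⟩],
    ⟨y, a + w + τ x y false, 0, false⟩, ?_, ?_, rfl, rfl⟩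
  · refine validpath_extend E τ μ wbar s P.dropLast st _ _ (by simp [hsv])
      (by simp [hst]) (by rw [hPd]; exact hval) (by rw [hsv]; exact hE) (by rw [hsv]; exact hw)
      (by rw [hsv, hst]) (by simp)
  · rw [show P.dropLast ++ [(⟨x, a, w, false⟩ : Step V),
        ⟨y, a + w + τ x y false, 0, false⟩] =
        (P.dropLast ++ [⟨x, a, w, false⟩]) ++ [⟨y, a + w + τ x y false, 0, false⟩]
      by simp]
    exact List.getLast?_concat

/-- if every arrival time in `[ax, ax + bx]` at `x` is achievable
from `s` and `(x, y) ∈ E` with autonomous duration `α = τ x y false`, then every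
arrival time in `[ax + α, ax + bx + wbar x + α]` at `y` is achievable from `s`. -/
theorem autonomous_node_covers_interval {V : Type*} (E : V → V → Prop)
    (τ : V → V → Bool → ℕ) (μ : ℕ → Bool) (wbar : V → ℕ) (s x y : V)
    (ax bx : ℕ)
    (hτ : ∀ u v, E u v → 0 < τ u v true ∧ τ u v true ≤ τ u v false)
    (hE : E x y)
    (hach : ∀ a, ax ≤ a → a ≤ ax + bx → Achievable E τ μ wbar s x a) :
    ∀ a', ax + τ x y false ≤ a' → a' ≤ ax + bx + wbar x + τ x y false →
      Achievable E τ μ wbar s y a' := by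
  intro a' h1 h2
  by_cases hd : a' - τ x y false ≤ ax + bx
  · have ha := hach (a' - τ x y false) (by omega) hd
    have := achievable_step E τ μ wbar s x y _ 0 ha hE (Nat.zero_le _)
    have he : a' - τ x y false + 0 + τ x y false = a' := by omega
    rwa [he] at this
  · have ha := hach (ax + bx) (by omega) le_rfl
    have := achievable_step E τ μ wbar s x y _ (a' - τ x y false - (ax + bx)) ha hE
      (by omega)
    have he : ax + bx + (a' - τ x y false - (ax + bx)) + τ x y false = a' := by omega
    rwa [he] at this
end

section
/- If every arrival time a with a_x ≤ a ≤ a_x + b_x at vertex x is achievable from the start vertex s, (x,y) ∈ E is an edge with assisted duration β = τ((x,y),1), and t_D is a departure time with a_x ≤ t_D ≤ a_x + b_x + w̄(x) such that the operator is available on [t_D, t_D + β], then the arrival time t_D + β at vertex y is achievable from s (by arriving at x at time max(a_x, t_D − w̄(x)), waiting until t_D, and traversing the edge in assisted mode). -/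
/-- if every arrival time in `[ax, ax + bx]` at `x` is achievable
from `s`, `(x, y) ∈ E` with assisted duration `β = τ x y true`, and `tD` is a
departure time in `[ax, ax + bx + wbar x]` with the operator available on
`[tD, tD + β]`, then arrival time `tD + β` at `y` is achievable from `s`. -/
theorem assisted_arrival_achievable {V : Type*} (E : V → V → Prop)
    (τ : V → V → Bool → ℕ) (μ : ℕ → Bool) (wbar : V → ℕ) (s x y : V)
    (ax bx : ℕ)
    (hτ : ∀ u v, E u v → 0 < τ u v true ∧ τ u v true ≤ τ u v false)
    (hE : E x y)
    (hach : ∀ a, ax ≤ a → a ≤ ax + bx → Achievable E τ μ wbar s x a)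
    (tD : ℕ) (htD₁ : ax ≤ tD) (htD₂ : tD ≤ ax + bx + wbar x)
    (hav : AvailOn μ tD (tD + τ x y true)) :
    Achievable E τ μ wbar s y (tD + τ x y true) := by
  set a := min tD (ax + bx) with ha
  have ha1 : ax ≤ a := le_min htD₁ (Nat.le_add_right _ _)
  have ha2 : a ≤ ax + bx := min_le_right _ _
  have ha3 : a ≤ tD := min_le_left _ _
  have ha4 : tD - a ≤ wbar x := by omega
  obtain ⟨P, st, hP, hlastEq, hstv, hstt⟩ := hach a ha1 ha2
  obtain ⟨⟨st0, hhead, hs0v, hs0t⟩, hstep⟩ := hP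
  have hne : P ≠ [] := by intro h; simp [h] at hhead
  have hn : 1 ≤ P.length := List.length_pos_iff.mpr hne
  have hlt : P.length - 1 < P.length := by omega
  have hst : P[P.length - 1] = st := by
    rw [List.getLast?_eq_getElem?, List.getElem?_eq_getElem hlt] at hlastEq
    exact Option.some.inj hlastEq
  have hs0 : P[0] = st0 := by
    rw [List.head?_eq_getElem?, List.getElem?_eq_getElem (by omega)] at hhead
    exact Option.some.inj hhead
  have hGP : ∀ (j k : ℕ) (e : j = k) (h : j < P.length) (h2 : k < P.length),
      P[j] = P[k] := by
    intro j k e h h2; subst e; rfl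
  set st' : Step V := ⟨x, a, tD - a, true⟩ with hst'
  set la : Step V := ⟨y, tD + τ x y true, 0, false⟩ with hla
  set P' : List (Step V) := P.dropLast ++ [st', la] with hP'
  have hdl : P.dropLast.length = P.length - 1 := List.length_dropLast
  have hlen : P'.length = P.length + 1 := by
    show (P.dropLast ++ [st', la]).length = P.length + 1
    simp [hdl]; omega
  have hgA : ∀ i (h : i < P.length - 1) (h' : i < P'.length), P'[i] = P[i]'(by omega) := by
    intro i h h'
    show (P.dropLast ++ [st', la])[i]'(by rw [← hP']; exact h') = P[i]'(by omega)
    rw [List.getElem_append_left (by omega), List.getElem_dropLast]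
  have hgB : ∀ j (e : j = P.length - 1) (h' : j < P'.length), P'[j] = st' := by
    intro j e h'
    subst e
    show (P.dropLast ++ [st', la])[P.length - 1]'(by rw [← hP']; exact h') = st'
    rw [List.getElem_append_right (by omega)]
    simp [hdl]
  have hgC : ∀ j (e : j = P.length) (h' : j < P'.length), P'[j] = la := by
    intro j e h'
    subst e
    show (P.dropLast ++ [st', la])[P.length]'(by rw [← hP']; exact h') = la
    rw [List.getElem_append_right (by omega)]
    have h2 : P.length - P.dropLast.length = 1 := by omega
    simp only [h2]
    rfl
  refine ⟨P', la, ⟨?_, ?_⟩, ?_, rfl, rfl⟩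
  · -- head condition
    have h0' : (0:ℕ) < P'.length := by omega
    refine ⟨P'[0], ?_, ?_, ?_⟩
    · rw [List.head?_eq_getElem?, List.getElem?_eq_getElem h0']
    all_goals {
      rcases Nat.lt_or_ge 0 (P.length - 1) with h0 | h0
      · rw [hgA 0 h0 h0', hs0]; first | exact hs0v | exact hs0t
      · have h1 : P.length - 1 = 0 := by omega
        rw [hgB 0 h1.symm h0']
        have hss : st = st0 := by rw [← hst, hGP _ 0 h1 hlt (by omega), hs0]
        have hx : x = s := by rw [← hstv, hss, hs0v]
        have ht0 : a = 0 := by rw [← hstt, hss, hs0t]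
        simp only [hst']
        first | exact hx | exact ht0
    }
  · -- step conditions
    intro i hi
    simp only [List.get_eq_getElem]
    have hi' : i + 1 < P.length + 1 := by omega
    rcases Nat.lt_or_ge (i + 1) (P.length - 1) with h1 | h1
    · rw [hgA i (by omega) (by omega), hgA (i+1) h1 (by omega)]
      have := hstep i (by omega)
      simpa using this
    · rcases Nat.lt_or_ge i (P.length - 1) with h2 | h2
      · -- i + 1 = P.length - 1
        have he : i + 1 = P.length - 1 := by omega
        rw [hgA i (by omega) (by omega), hgB (i+1) he (by omega)]
        have hq : P[i+1]'(by omega) = st := by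
          rw [hGP (i+1) (P.length - 1) he (by omega) hlt]; exact hst
        have := hstep i (by omega)
        simp only [List.get_eq_getElem] at this
        rw [hq] at this
        have hx : st.v = x := hstv
        have ht : st.t = a := hstt
        refine ⟨?_, this.2.1, ?_, ?_⟩
        · simp only [hst']; rw [hx, ht] at this; exact this.1
        · simp only [hst']; rw [hx, ht] at this; exact this.2.2.1
        · simp only [hst']; rw [hx, ht] at this; exact this.2.2.2
      · -- i = P.length - 1
        have he : i = P.length - 1 := by omega
        have he2 : i + 1 = P.length := by omega
        rw [hgB i he (by omega), hgC (i+1) he2 (by omega)]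
        refine ⟨hE, ha4, by simp only [hst', hla]; omega, ?_⟩
        intro _
        have hta : a + (tD - a) = tD := by omega
        simp only [hst', hla, hta]
        exact hav
  · -- getLast
    show (P.dropLast ++ [st', la]).getLast? = some la
    rw [show P.dropLast ++ [st', la] = (P.dropLast ++ [st']) ++ [la] by simp]
    exact List.getLast?_concat
end

section
/- Let (x,y) ∈ E with α = τ((x,y),0), β = τ((x,y),1), let (x, a_x, b_x) be a node, and let t_max = min(α − β, b_x + w̄(x)). An arrival time a_y at y is directly reachable from (x, a_x, b_x) if and only if either a_x + α ≤ a_y ≤ a_x + b_x + w̄(x) + α, or a_y = t + β for some departure time t with a_x ≤ t ≤ a_x + t_max such that the operator is available on [t, t + β]. -/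
/-- Arrival time `ay` at `y` is directly reachable from the node `(x, ax, bx)`:
there is a departure time `tD ∈ [ax, ax + bx + wbar x]` and a mode `m` with
`ay = tD + τ x y m`, where assisted mode requires operator availability on
`[tD, ay]`. -/
def DirectlyReachable {V : Type*} (τ : V → V → Bool → ℕ) (μ : ℕ → Bool)
    (wbar : V → ℕ) (x y : V) (ax bx ay : ℕ) : Prop :=
  ∃ tD m, ax ≤ tD ∧ tD ≤ ax + bx + wbar x ∧ ay = tD + τ x y m ∧
    (m = true → AvailOn μ tD ay)

/-- with `tmax = min (α - β) (bx + wbar x)`, an arrival time `ay`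
at `y` is directly reachable from `(x, ax, bx)` iff it lies in the autonomous
interval `[ax + α, ax + bx + wbar x + α]`, or `ay = t + β` for some departure
time `t ∈ [ax, ax + tmax]` with the operator available on `[t, t + β]`. -/
theorem directly_reachable_characterization {V : Type*} (E : V → V → Prop)
    (τ : V → V → Bool → ℕ) (μ : ℕ → Bool) (wbar : V → ℕ) (x y : V)
    (ax bx ay : ℕ)
    (hτ : ∀ u v, E u v → 0 < τ u v true ∧ τ u v true ≤ τ u v false)
    (hE : E x y) :
    DirectlyReachable τ μ wbar x y ax bx ay ↔
      ((ax + τ x y false ≤ ay ∧ ay ≤ ax + bx + wbar x + τ x y false) ∨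
        ∃ t, ax ≤ t ∧ t ≤ ax + min (τ x y false - τ x y true) (bx + wbar x) ∧
          AvailOn μ t (t + τ x y true) ∧ ay = t + τ x y true) := by
  obtain ⟨hβpos, hβα⟩ := hτ x y hE
  constructor
  · rintro ⟨tD, m, h1, h2, h3, h4⟩
    cases m with
    | false => left; omega
    | true =>
      by_cases hc : tD ≤ ax + (τ x y false - τ x y true)
      · right
        exact ⟨tD, h1, by omega, h3 ▸ h4 rfl, h3⟩
      · left; omega
  · rintro (⟨h1, h2⟩ | ⟨t, h1, h2, h3, h4⟩)
    · exact ⟨ay - τ x y false, false, by omega, by omega, by omega,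
        fun h => by simp at h⟩
    · exact ⟨t, true, h1, by omega, h4, fun _ => h4 ▸ h3⟩
end

section
/- (Sufficiency of critical departure times.) Let (x,y) ∈ E with α = τ((x,y),0), β = τ((x,y),1), let (x, a_x, b_x) be a node, let t_max = min(α − β, b_x + w̄(x)), and let F = {t ∈ ℕ : a_x ≤ t ≤ a_x + t_max and the operator is available on [t, t + β]} be the feasible assisted departure set. Call t_d ∈ F a critical departure time if t_d = a_x or t_d − 1 ∉ F. Then for every t ∈ F there exists a critical departure time t_d ∈ F with t_d ≤ t and [t_d, t] ⊆ F. Consequently, every arrival time at y directly reachable from (x, a_x, b_x) lies either in the autonomous interval [a_x + α, a_x + b_x + w̄(x) + α] or in an interval [t_d + β, t_d + b + β] for some critical departure time t_d and b ∈ ℕ with [t_d, t_d + b] ⊆ F; i.e., generating one node per critical departure time (plus the autonomous node) covers all directly reachable arrival times. -/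
/-- sufficiency of critical departure times: every feasible
assisted departure time `t ∈ F` is preceded by a critical departure time
`td ∈ F` (with `td = ax` or `td - 1 ∉ F`) such that `[td, t] ⊆ F`; hence every
directly reachable arrival time at `y` lies in the autonomous interval or in an
interval `[td + β, td + b + β]` with `td` critical and `[td, td + b] ⊆ F`. -/
theorem critical_departure_times_sufficient {V : Type*} (E : V → V → Prop)
    (τ : V → V → Bool → ℕ) (μ : ℕ → Bool) (wbar : V → ℕ) (x y : V)
    (ax bx : ℕ)
    (hτ : ∀ u v, E u v → 0 < τ u v true ∧ τ u v true ≤ τ u v false)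
    (hE : E x y)
    (tmax : ℕ) (htmax : tmax = min (τ x y false - τ x y true) (bx + wbar x))
    (F : Set ℕ)
    (hF : F = {t : ℕ | ax ≤ t ∧ t ≤ ax + tmax ∧ AvailOn μ t (t + τ x y true)}) :
    (∀ t ∈ F, ∃ td ∈ F, (td = ax ∨ td - 1 ∉ F) ∧ td ≤ t ∧ Set.Icc td t ⊆ F) ∧
    (∀ ay, DirectlyReachable τ μ wbar x y ax bx ay →
      (ax + τ x y false ≤ ay ∧ ay ≤ ax + bx + wbar x + τ x y false) ∨
      ∃ td ∈ F, (td = ax ∨ td - 1 ∉ F) ∧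
        ∃ b : ℕ, Set.Icc td (td + b) ⊆ F ∧
          td + τ x y true ≤ ay ∧ ay ≤ td + b + τ x y true) := by

  classical
  have hβα := hτ x y hE
  have part1 : ∀ t ∈ F, ∃ td ∈ F, (td = ax ∨ td - 1 ∉ F) ∧ td ≤ t ∧ Set.Icc td t ⊆ F := by
    intro t ht
    set S : Set ℕ := {s | s ≤ t ∧ Set.Icc s t ⊆ F} with hS
    have hSne : t ∈ S := by
      refine ⟨le_refl t, ?_⟩
      intro u hu
      have : u = t := le_antisymm hu.2 hu.1
      rwa [this]
    have hmem := Nat.sInf_mem (⟨t, hSne⟩ : S.Nonempty)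
    set td := sInf S with htd
    clear_value td
    have htdF : td ∈ F := hmem.2 ⟨le_refl td, hmem.1⟩
    have haxtd : ax ≤ td := by
      have := htdF; rw [hF] at this; exact this.1
    have htdt : td ≤ t := hmem.1
    refine ⟨td, htdF, ?_, hmem.1, hmem.2⟩
    by_cases hax : td = ax
    · exact Or.inl hax
    · refine Or.inr fun hcon => ?_
      have h1 : 1 ≤ td := by omega
      have : td - 1 ∈ S := by
        refine ⟨by omega, ?_⟩
        intro u hu
        rcases Nat.lt_or_ge u td with h | h
        · have : u = td - 1 := by
            have := hu.1; omega
          rwa [this]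
        · exact hmem.2 ⟨h, hu.2⟩
      have := Nat.sInf_le this
      omega
  refine ⟨part1, ?_⟩
  intro ay ⟨tD, m, h1, h2, h3, h4⟩
  cases m with
  | false => left; omega
  | true =>
    have hav := h4 rfl
    by_cases htD : tD ≤ ax + tmax
    · have htDF : tD ∈ F := by
        rw [hF]
        exact ⟨h1, htD, by rw [← h3]; exact hav⟩
      obtain ⟨td, htdF, hcrit, hle, hsub⟩ := part1 tD htDF
      refine Or.inr ⟨td, htdF, hcrit, tD - td, ?_, by omega, by omega⟩
      have : td + (tD - td) = tD := by omega
      rw [this]; exact hsub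
    · left; omega
end

section
/- (Dominated nodes are redundant.) Let (x,y) ∈ E and let (x, a, b) and (x, a', b') be two nodes at the same vertex x such that a' ≤ a and a + b ≤ a' + b' (i.e., the arrival-time range [a, a+b] is contained in [a', a'+b']). Then every arrival time at y directly reachable from (x, a, b) is also directly reachable from (x, a', b'). Hence a node whose arrival-time range is contained in the range of another node at the same vertex can be removed from the search queue without losing any reachable arrival times. -/
/-- dominated nodes are redundant: if the arrival-time range
`[a, a + b]` of a node at `x` is contained in the range `[a', a' + b']` of
another node at `x`, then every arrival time at `y` directly reachable from
`(x, a, b)` is also directly reachable from `(x, a', b')`. -/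
theorem dominated_node_redundant {V : Type*} (E : V → V → Prop)
    (τ : V → V → Bool → ℕ) (μ : ℕ → Bool) (wbar : V → ℕ) (x y : V)
    (a b a' b' : ℕ)
    (hτ : ∀ u v, E u v → 0 < τ u v true ∧ τ u v true ≤ τ u v false)
    (hE : E x y)
    (h₁ : a' ≤ a) (h₂ : a + b ≤ a' + b') :
    ∀ ay, DirectlyReachable τ μ wbar x y a b ay →
      DirectlyReachable τ μ wbar x y a' b' ay := by
  rintro ay ⟨tD, m, h3, h4, h5, h6⟩
  exact ⟨tD, m, le_trans h₁ h3, le_trans h4 (by omega), h5, h6⟩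
end

section
/- (Soundness of node expansion.) Suppose every arrival time a with a_x ≤ a ≤ a_x + b_x at vertex x is achievable from the start vertex s, let (x,y) ∈ E, and let a_y be an arrival time at y that is directly reachable from the node (x, a_x, b_x). Then a_y is achievable at y from s. In particular, the arrival-time ranges of all nodes generated by exploring (x, a_x, b_x) consist solely of achievable arrival times, provided [a_x, a_x + b_x] consists of achievable arrival times at x. -/
/-- soundness of node expansion: if every arrival time in
`[ax, ax + bx]` at `x` is achievable from `s`, `(x, y) ∈ E`, and `ay` is
directly reachable at `y` from the node `(x, ax, bx)`, then `ay` is achievable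
at `y` from `s`. -/
theorem node_expansion_sound {V : Type*} (E : V → V → Prop)
    (τ : V → V → Bool → ℕ) (μ : ℕ → Bool) (wbar : V → ℕ) (s x y : V)
    (ax bx : ℕ)
    (hτ : ∀ u v, E u v → 0 < τ u v true ∧ τ u v true ≤ τ u v false)
    (hE : E x y)
    (hach : ∀ a, ax ≤ a → a ≤ ax + bx → Achievable E τ μ wbar s x a)
    (ay : ℕ) (hdr : DirectlyReachable τ μ wbar x y ax bx ay) :
    Achievable E τ μ wbar s y ay := by
  obtain ⟨tD, m, h1, h2, h3, h4⟩ := hdr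
  set a := max ax (tD - wbar x) with ha
  have ha1 : ax ≤ a := le_max_left _ _
  have ha2 : a ≤ ax + bx := max_le (Nat.le_add_right _ _) (by omega)
  have hatD : a ≤ tD := max_le h1 (Nat.sub_le _ _)
  have hwa : tD - a ≤ wbar x := by
    have : tD - wbar x ≤ a := le_max_right _ _
    omega
  obtain ⟨P, st, ⟨⟨st0, hh, hsv, hst0⟩, hsteps⟩, hlast, hstv, hstt⟩ := hach a ha1 ha2
  have hPne : P ≠ [] := by rintro rfl; simp at hlast
  have hn : 1 ≤ P.length := List.length_pos_iff.mpr hPne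
  set st' : Step V := ⟨x, a, tD - a, m⟩ with hst'
  set qst : Step V := ⟨y, ay, 0, false⟩ with hqst
  have hlen : (P.dropLast ++ [st', qst]).length = P.length + 1 := by
    simp [List.length_dropLast]; omega
  have hstlast : ∀ j (hj : j = P.length - 1) (h : j < P.length), P[j]'h = st := by
    intro j hj h
    subst hj
    have h0 := List.getLast?_eq_getElem? (l := P)
    rw [hlast, List.getElem?_eq_getElem (by omega), Option.some_inj] at h0
    exact h0.symm
  have hgetlt : ∀ j (hj : j < P.length - 1) (h : j < (P.dropLast ++ [st', qst]).length),
      (P.dropLast ++ [st', qst])[j]'h = P[j]'(by omega) := by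
    intro j hj h
    rw [List.getElem_append_left (by simpa [List.length_dropLast] using hj)]
    exact List.getElem_dropLast _
  have hgetst : ∀ j (hj : j = P.length - 1) (h : j < (P.dropLast ++ [st', qst]).length),
      (P.dropLast ++ [st', qst])[j]'h = st' := by
    intro j hj h
    subst hj
    rw [List.getElem_append_right (by simp [List.length_dropLast])]
    simp [List.length_dropLast]
  have hgetq : ∀ j (hj : j = P.length) (h : j < (P.dropLast ++ [st', qst]).length),
      (P.dropLast ++ [st', qst])[j]'h = qst := by
    intro j hj h
    subst hj
    rw [List.getElem_append_right (by simp [List.length_dropLast])]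
    have hz : P.length - P.dropLast.length = 1 := by simp [List.length_dropLast]; omega
    simp only [List.length_dropLast] at hz ⊢
    simp [hz]
  refine ⟨P.dropLast ++ [st', qst], qst, ⟨?_, ?_⟩, ?_, rfl, rfl⟩
  · -- head
    rcases P with _ | ⟨p0, rest⟩
    · simp at hPne
    · rcases rest with _ | ⟨r0, rest'⟩
      · -- P = [p0]
        have hp0 : p0 = st0 := by simpa using hh
        have hp0' : p0 = st := by simpa using hlast
        refine ⟨st', by simp, ?_, ?_⟩
        · show x = s
          rw [← hstv, ← hp0', hp0, hsv]
        · show a = 0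
          rw [← hstt, ← hp0', hp0, hst0]
      · refine ⟨st0, ?_, hsv, hst0⟩
        have hp0 : p0 = st0 := by simpa using hh
        have hdl : (p0 :: r0 :: rest').dropLast = p0 :: (r0 :: rest').dropLast := rfl
        rw [hdl]
        simp [hp0]
  · -- steps
    intro i hi
    simp only [List.get_eq_getElem]
    have hi' : i + 1 < P.length + 1 := by rwa [hlen] at hi
    have hiP : i < P.length := by omega
    by_cases hc1 : i + 1 < P.length - 1
    · rw [hgetlt i (by omega), hgetlt (i+1) hc1]
      have := hsteps i (by omega)
      simpa only [List.get_eq_getElem] using this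
    · by_cases hc2 : i + 1 = P.length - 1
      · rw [hgetlt i (by omega), hgetst (i+1) hc2]
        have := hsteps i (by omega)
        simp only [List.get_eq_getElem] at this
        rw [hstlast (i+1) hc2] at this
        obtain ⟨hA, hB, hC, hD⟩ := this
        refine ⟨by simpa [hst', hstv] using hA, hB, ?_, ?_⟩
        · show st'.t = _
          simpa [hst', hstt, hstv] using hC
        · intro hm
          have := hD hm
          show AvailOn μ _ st'.t
          simpa [hst', hstt] using this
      · have hieq : i = P.length - 1 := by omega
        rw [hgetst i hieq, hgetq (i+1) (by omega)]
        refine ⟨hE, hwa, ?_, ?_⟩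
        · show qst.t = st'.t + st'.w + τ st'.v qst.v st'.m
          simp only [hst', hqst]
          omega
        · intro hm
          have hav := h4 (by simpa [hst'] using hm)
          show AvailOn μ (st'.t + st'.w) qst.t
          simp only [hst', hqst]
          show AvailOn μ (a + (tD - a)) ay
          rwa [Nat.add_sub_cancel' hatD]
  · -- getLast?
    rw [show P.dropLast ++ [st', qst] = (P.dropLast ++ [st']) ++ [qst] by simp]
    exact List.getLast?_concat
end

section
/- (Monotonicity in operator availability; admissibility of the full-availability heuristic.) Let μ and μ' be two operator availability functions with μ(t) = true implying μ'(t) = true for every t ∈ ℕ. Then every execution path that is valid under availability μ is also valid under availability μ'. Consequently, every arrival time at any vertex achievable under μ is achievable under μ', and the minimum achievable arrival time at a goal vertex g under μ' is at most the minimum achievable arrival time at g under μ. In particular, the optimal arrival time computed under the assumption that the operator is always available is a lower bound on the true optimal arrival time, so it is an admissible heuristic. -/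
/-- monotonicity in operator availability; admissibility of the
full-availability heuristic: if `μ t = true` implies `μ' t = true` for all
`t`, then every path valid under `μ` is valid under `μ'`, every arrival time
achievable under `μ` is achievable under `μ'`, and the minimum achievable
arrival time at any goal vertex `g` under `μ'` is at most that under `μ`. -/
theorem availability_monotone_admissible {V : Type*} (E : V → V → Prop)
    (τ : V → V → Bool → ℕ) (μ μ' : ℕ → Bool) (wbar : V → ℕ) (s : V)
    (hμ : ∀ t, μ t = true → μ' t = true) :
    (∀ P, ValidPath E τ μ wbar s P → ValidPath E τ μ' wbar s P) ∧
    (∀ (x : V) (a : ℕ), Achievable E τ μ wbar s x a →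
      Achievable E τ μ' wbar s x a) ∧
    (∀ g : V, (∃ a, Achievable E τ μ wbar s g a) →
      sInf {a | Achievable E τ μ' wbar s g a} ≤
        sInf {a | Achievable E τ μ wbar s g a}) := by
  have hpath : ∀ P, ValidPath E τ μ wbar s P → ValidPath E τ μ' wbar s P := by
    intro P ⟨hhead, hsteps⟩
    refine ⟨hhead, fun i hi => ?_⟩
    obtain ⟨h1, h2, h3, h4⟩ := hsteps i hi
    exact ⟨h1, h2, h3, fun hm t ht1 ht2 => hμ t (h4 hm t ht1 ht2)⟩
  have hach : ∀ (x : V) (a : ℕ), Achievable E τ μ wbar s x a →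
      Achievable E τ μ' wbar s x a := by
    rintro x a ⟨P, st, hv, h⟩
    exact ⟨P, st, hpath P hv, h⟩
  refine ⟨hpath, hach, fun g ⟨a, ha⟩ => ?_⟩
  have h1 : sInf {a | Achievable E τ μ wbar s g a} ∈ {a | Achievable E τ μ wbar s g a} :=
    Nat.sInf_mem ⟨a, ha⟩
  exact Nat.sInf_le (hach g _ h1)
end
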